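/- arXiv:2203.04256 — 14 statements merged into one kernel-verified Lean document; each statement's English description precedes it below -/
import Mathlib

section
/- If an ideal I of a commutative ring R is contained in the union of finitely many ideals I₁, …, Iₙ, then there exists a positive integer d such that Iᵈ ⊆ I_k for some k. -/
/-!
After passing to an irredundant subcover `f k`, `k ∈ s`, some `c ∈ I` lies in `f m` and in no
other member. By induction on `t`, every product of `2 ^ t` elements of `I` is congruent modulo
`f m` to some `y ∈ I` that lies in `f m` or in more than `t` members of the cover. To multiply two
such representatives `y₁, y₂`: either some member contains `y₂` but not `y₁`, and then `y₁ y₂`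
lies in more members than `y₁`; or every member containing `y₂` contains `y₁`, and then
`(y₁ + c) y₂ ≡ y₁ y₂` lies in more members than `y₂`, because `y₁ + c ∈ I` lies in some member
and in none containing `y₁`. A cover has only `#s` members, so at `t = #s` we get
`I ^ 2 ^ #s ≤ f m`.
-/

open Finset Pointwise

section McCoy

variable {R ι : Type*} [CommRing R] (I : Ideal R) (s : Finset ι) (f : ι → Ideal R)

open Classical in
noncomputable def containingIndices (y : R) : Finset ι := {k ∈ s | y ∈ f k}

variable {I s f}

theorem mem_containingIndices {y : R} {k : ι} :
    k ∈ containingIndices s f y ↔ k ∈ s ∧ y ∈ f k := by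
  classical
  simp [containingIndices]

theorem containingIndices_nonempty (hI : (I : Set R) ⊆ ⋃ k ∈ s, (f k : Set R)) {y : R}
    (hy : y ∈ I) : (containingIndices s f y).Nonempty := by
  obtain ⟨k, hk, hyk⟩ := Set.mem_iUnion₂.mp (hI hy)
  exact ⟨k, mem_containingIndices.mpr ⟨hk, hyk⟩⟩

theorem containingIndices_union_subset_mul [DecidableEq ι] (a b : R) :
    containingIndices s f a ∪ containingIndices s f b ⊆ containingIndices s f (a * b) := by
  intro k hk
  rw [mem_union, mem_containingIndices, mem_containingIndices] at hk
  rw [mem_containingIndices]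
  rcases hk with ⟨hks, ha⟩ | ⟨hks, hb⟩
  · exact ⟨hks, (f k).mul_mem_right b ha⟩
  · exact ⟨hks, (f k).mul_mem_left a hb⟩

variable (I s f) in
def HasSpreadRep (m : ι) (t : ℕ) (x : R) : Prop :=
  ∃ y ∈ I, x - y ∈ f m ∧ (y ∈ f m ∨ t < #(containingIndices s f y))

variable {m : ι} {c : R}

theorem mem_of_forall_ne_notMem (hI : (I : Set R) ⊆ ⋃ k ∈ s, (f k : Set R)) (hc : c ∈ I)
    (hcm : ∀ k ∈ s, k ≠ m → c ∉ f k) : c ∈ f m := by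
  obtain ⟨k, hk, hck⟩ := Set.mem_iUnion₂.mp (hI hc)
  obtain rfl | hkm := eq_or_ne k m
  · exact hck
  · exact absurd hck (hcm k hk hkm)

theorem disjoint_containingIndices_add (hcm : ∀ k ∈ s, k ≠ m → c ∉ f k) {y : R} (hy : y ∉ f m) :
    Disjoint (containingIndices s f (y + c)) (containingIndices s f y) := by
  refine disjoint_left.mpr fun k hkc hky => ?_
  rw [mem_containingIndices] at hkc hky
  have hck : c ∈ f k := by simpa using (f k).sub_mem hkc.2 hky.2
  obtain rfl | hkm := eq_or_ne k m
  · exact hy hky.2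
  · exact hcm k hky.1 hkm hck

theorem HasSpreadRep.mul (hI : (I : Set R) ⊆ ⋃ k ∈ s, (f k : Set R)) (hc : c ∈ I)
    (hcm : ∀ k ∈ s, k ≠ m → c ∉ f k) {t : ℕ} {a b : R}
    (ha : HasSpreadRep I s f m t a) (hb : HasSpreadRep I s f m t b) :
    HasSpreadRep I s f m (t + 1) (a * b) := by
  classical
  obtain ⟨y₁, hy₁I, hay₁, hy₁⟩ := ha
  obtain ⟨y₂, -, hby₂, hy₂⟩ := hb
  have hcongr : ∀ z ∈ f m, a * b - (y₁ + z) * y₂ ∈ f m := fun z hz => by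
    have : a * b - (y₁ + z) * y₂ = a * (b - y₂) + (a - y₁) * y₂ - z * y₂ := by ring
    rw [this]
    exact sub_mem (add_mem ((f m).mul_mem_left _ hby₂) ((f m).mul_mem_right _ hay₁))
      ((f m).mul_mem_right _ hz)
  have hcongr₀ : a * b - y₁ * y₂ ∈ f m := by simpa using hcongr 0 (f m).zero_mem
  by_cases hy₁m : y₁ ∈ f m
  · exact ⟨y₁ * y₂, I.mul_mem_right _ hy₁I, hcongr₀, .inl ((f m).mul_mem_right _ hy₁m)⟩
  by_cases hy₂m : y₂ ∈ f m
  · exact ⟨y₁ * y₂, I.mul_mem_right _ hy₁I, hcongr₀, .inl ((f m).mul_mem_left _ hy₂m)⟩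
  replace hy₁ := hy₁.resolve_left hy₁m
  replace hy₂ := hy₂.resolve_left hy₂m
  by_cases hsub : containingIndices s f y₂ ⊆ containingIndices s f y₁
  · refine ⟨(y₁ + c) * y₂, I.mul_mem_right _ (I.add_mem hy₁I hc),
      hcongr c (mem_of_forall_ne_notMem hI hc hcm), .inr ?_⟩
    have hdisj := (disjoint_containingIndices_add hcm hy₁m).mono_right hsub
    have hne := containingIndices_nonempty hI (I.add_mem hy₁I hc)
    have := card_le_card (containingIndices_union_subset_mul (s := s) (f := f) (y₁ + c) y₂)
    rw [card_union_of_disjoint hdisj] at this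
    have := hne.card_pos
    omega
  · obtain ⟨k, hk₂, hk₁⟩ := not_subset.mp hsub
    refine ⟨y₁ * y₂, I.mul_mem_right _ hy₁I, hcongr₀, .inr ?_⟩
    have hins : insert k (containingIndices s f y₁) ⊆ containingIndices s f (y₁ * y₂) :=
      insert_subset (containingIndices_union_subset_mul y₁ y₂ (mem_union_right _ hk₂))
        (subset_union_left.trans (containingIndices_union_subset_mul y₁ y₂))
    have := card_le_card hins
    rw [card_insert_of_notMem hk₁] at this
    omega

theorem hasSpreadRep_of_mem_pow (hI : (I : Set R) ⊆ ⋃ k ∈ s, (f k : Set R)) (hc : c ∈ I)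
    (hcm : ∀ k ∈ s, k ≠ m → c ∉ f k) (t : ℕ) {x : R} (hx : x ∈ (I : Set R) ^ 2 ^ t) :
    HasSpreadRep I s f m t x := by
  induction t generalizing x with
  | zero =>
    rw [pow_zero, pow_one] at hx
    exact ⟨x, hx, by simp, .inr (containingIndices_nonempty hI hx).card_pos⟩
  | succ t ih =>
    rw [pow_succ, pow_mul, sq] at hx
    obtain ⟨a, ha, b, hb, rfl⟩ := Set.mem_mul.mp hx
    exact (ih ha).mul hI hc hcm (ih hb)

theorem HasSpreadRep.mem_of_card {x : R} (hx : HasSpreadRep I s f m #s x) : x ∈ f m := by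
  obtain ⟨y, -, hxy, hy | hcard⟩ := hx
  · simpa using add_mem hxy hy
  · have : containingIndices s f y ⊆ s := fun k hk => (mem_containingIndices.mp hk).1
    exact absurd (card_le_card this) (by omega)

theorem pow_two_pow_card_le_of_unique_mem (hI : (I : Set R) ⊆ ⋃ k ∈ s, (f k : Set R))
    (hc : c ∈ I) (hcm : ∀ k ∈ s, k ≠ m → c ∉ f k) : I ^ 2 ^ #s ≤ f m := by
  rw [Submodule.pow_eq_span_pow_set]
  exact Submodule.span_le.mpr fun x hx =>
    (hasSpreadRep_of_mem_pow hI hc hcm #s hx).mem_of_card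

theorem exists_pow_le_of_subset_biUnion (hI : (I : Set R) ⊆ ⋃ k ∈ s, (f k : Set R)) :
    ∃ d, 0 < d ∧ ∃ k ∈ s, I ^ d ≤ f k := by
  classical
  induction s using Finset.strongInduction with
  | H s ih =>
    by_cases hred : ∃ m ∈ s, (I : Set R) ⊆ ⋃ k ∈ s.erase m, (f k : Set R)
    · obtain ⟨m, hm, hIm⟩ := hred
      obtain ⟨d, hd, k, hk, hIk⟩ := ih _ (erase_ssubset hm) hIm
      exact ⟨d, hd, k, mem_of_mem_erase hk, hIk⟩
    push Not at hred
    obtain ⟨m, hm, -⟩ := Set.mem_iUnion₂.mp (hI I.zero_mem)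
    obtain ⟨c, hc, hcm⟩ := Set.not_subset.mp (hred m hm)
    simp only [Set.mem_iUnion, mem_erase, SetLike.mem_coe, not_exists] at hcm
    exact ⟨2 ^ #s, by positivity, m, hm,
      pow_two_pow_card_le_of_unique_mem hI hc fun k hk hkm => hcm k ⟨hkm, hk⟩⟩

end McCoy

theorem mccoy_avoidance {R : Type*} [CommRing R] (n : ℕ) (I : Ideal R) (f : Fin n → Ideal R)
    (h : (I : Set R) ⊆ ⋃ k, (f k : Set R)) :
    ∃ d : ℕ, 0 < d ∧ ∃ k, I ^ d ≤ f k := by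
  obtain ⟨d, hd, k, -, hk⟩ := exists_pow_le_of_subset_biUnion (s := univ) (f := f) (I := I)
    (by simpa using h)
  exact ⟨d, hd, k, hk⟩
end

section
/- If an ideal I of a commutative ring R is contained in the union of finitely many ideals I₁, …, Iₙ, all but at most two of which are radical ideals, then I ⊆ I_k for some k. -/
/-!
A radical ideal is the intersection of the primes above it, so a radical ideal not containing `I`
lies in a prime not containing `I`. Enlarging each radical `I_k` to such a prime keeps `I` inside
the union, and the classical prime avoidance lemma, which tolerates two non-prime ideals, applies.
-/

namespace Ideal

variable {R : Type*} [CommRing R]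

theorem IsRadical.exists_isPrime_le_not_le {I J : Ideal R} (hJ : J.IsRadical) (hIJ : ¬ I ≤ J) :
    ∃ P : Ideal R, P.IsPrime ∧ J ≤ P ∧ ¬ I ≤ P := by
  rw [← hJ.radical, radical_eq_sInf, le_sInf_iff] at hIJ
  push Not at hIJ
  obtain ⟨P, ⟨hJP, hP⟩, hIP⟩ := hIJ
  exact ⟨P, hP, hJP, hIP⟩

theorem exists_le_of_subset_union_radical {ι : Type*} {s : Finset ι} {f : ι → Ideal R} (a b : ι)
    (hr : ∀ i ∈ s, i ≠ a → i ≠ b → (f i).IsRadical) {I : Ideal R}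
    (h : (I : Set R) ⊆ ⋃ i ∈ (s : Set ι), f i) : ∃ i ∈ s, I ≤ f i := by
  by_contra! hc
  have enlarge : ∀ i, ∃ P : Ideal R, f i ≤ P ∧ (i ∈ s → ¬ I ≤ P ∧ (i ≠ a → i ≠ b → P.IsPrime)) := by
    intro i
    by_cases hi : i ∈ s ∧ i ≠ a ∧ i ≠ b
    · obtain ⟨P, hP, hfP, hIP⟩ :=
        (hr i hi.1 hi.2.1 hi.2.2).exists_isPrime_le_not_le (hc i hi.1)
      exact ⟨P, hfP, fun _ => ⟨hIP, fun _ _ => hP⟩⟩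
    · exact ⟨f i, le_rfl, fun his => ⟨hc i his, fun ha hb => (hi ⟨his, ha, hb⟩).elim⟩⟩
  choose P hfP hP using enlarge
  have hIP : (I : Set R) ⊆ ⋃ i ∈ (s : Set ι), P i :=
    h.trans (Set.iUnion₂_mono fun i _ => hfP i)
  obtain ⟨i, hi, hIi⟩ :=
    (subset_union_prime a b fun i hi ha hb => (hP i hi).2 ha hb).1 hIP
  exact (hP i hi).1 hIi

end Ideal

theorem Finset.exists_subset_pair_of_card_le_two {α : Type*} [DecidableEq α] [Nonempty α]
    {s : Finset α} (hs : s.card ≤ 2) : ∃ a b : α, s ⊆ {a, b} := by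
  interval_cases h : s.card
  · obtain ⟨a⟩ := ‹Nonempty α›
    exact ⟨a, a, by simp [Finset.card_eq_zero.1 h]⟩
  · obtain ⟨a, rfl⟩ := Finset.card_eq_one.1 h
    exact ⟨a, a, by simp⟩
  · obtain ⟨a, b, -, rfl⟩ := Finset.card_eq_two.1 h
    exact ⟨a, b, subset_rfl⟩

open scoped Classical in
theorem avoidance_all_but_two_radical {R : Type*} [CommRing R] (n : ℕ) (I : Ideal R)
    (f : Fin n → Ideal R)
    (hrad : (Finset.univ.filter fun k => ¬ (f k).IsRadical).card ≤ 2)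
    (h : (I : Set R) ⊆ ⋃ k, (f k : Set R)) :
    ∃ k, I ≤ f k := by
  rcases isEmpty_or_nonempty (Fin n) with hn | hn
  · simpa using h I.zero_mem
  obtain ⟨a, b, hab⟩ := Finset.exists_subset_pair_of_card_le_two hrad
  have hr : ∀ i ∈ (Finset.univ : Finset (Fin n)), i ≠ a → i ≠ b → (f i).IsRadical := by
    intro i _ ha hb
    by_contra hi
    simpa [ha, hb] using hab (Finset.mem_filter.2 ⟨Finset.mem_univ i, hi⟩)
  obtain ⟨k, -, hk⟩ := Ideal.exists_le_of_subset_union_radical a b hr (by simpa using h)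
  exact ⟨k, hk⟩
end

section
/- Every idempotent ideal has the avoidance property: if I is an ideal of a commutative ring R with I = I², and I is contained in a finite union of ideals I₁, …, Iₙ, then I ⊆ I_k for some k. -/
/-!
By B. H. Neumann's lemma, the ideals `f k` that meet `I` in a subgroup of infinite index in `I`
can be dropped from the cover. The intersection `D` of the remaining ones then meets `I` in a
subgroup of finite index, so the image of `I` in `R ⧸ D` is a finitely generated idempotent ideal,
hence generated by an idempotent. Lifting it gives `e ∈ I` with `x - e * x ∈ D` for all `x ∈ I`;
whichever `f k` in the reduced cover contains `e` then contains `x = (x - e * x) + e * x`.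
-/

open scoped Pointwise

@[to_additive]
theorem Subgroup.exists_finiteIndex_subgroupOf_of_subset_iUnion {G ι : Type*} [Group G]
    [Finite ι] {K : Subgroup G} {H : ι → Subgroup G}
    (hcovers : (K : Set G) ⊆ ⋃ i, (H i : Set G)) :
    ∀ x ∈ K, ∃ i, ((H i).subgroupOf K).FiniteIndex ∧ x ∈ H i := by
  classical
  have := Fintype.ofFinite ι
  have hK : ⋃ i ∈ Finset.univ, (1 : K) • (((H i).subgroupOf K : Subgroup K) : Set K) =
      Set.univ := by
    refine Set.eq_univ_of_forall fun x => ?_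
    simpa [Subgroup.mem_subgroupOf] using hcovers x.2
  intro x hx
  simpa [Subgroup.mem_subgroupOf] using
    (leftCoset_cover_filter_FiniteIndex hK).ge (Set.mem_univ ⟨x, hx⟩)

theorem Ideal.map_quotientMk_fg_of_finiteIndex {R : Type*} [CommRing R] {I D : Ideal R}
    [(D.toAddSubgroup.addSubgroupOf I.toAddSubgroup).FiniteIndex] :
    (I.map (Ideal.Quotient.mk D)).FG := by
  let ψ : I →+ R ⧸ D := (Ideal.Quotient.mk D).toAddMonoidHom.comp I.toAddSubgroup.subtype
  have hker : ψ.ker = D.toAddSubgroup.addSubgroupOf I.toAddSubgroup := by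
    ext x
    exact Ideal.Quotient.eq_zero_iff_mem
  have hrange : Set.range ψ = Ideal.Quotient.mk D '' I := by
    rw [AddMonoidHom.coe_comp, Set.range_comp]
    exact congrArg _ Subtype.range_coe
  have : Finite ψ.range := by
    have hindex := AddSubgroup.index_ker ψ
    rw [hker] at hindex
    exact (Nat.card_ne_zero.mp (hindex ▸ AddSubgroup.FiniteIndex.index_ne_zero)).2
  refine Submodule.fg_span (hrange ▸ ?_)
  rw [← AddMonoidHom.coe_range]
  exact Set.toFinite _

theorem Ideal.exists_mem_forall_sub_mul_mem {R : Type*} [CommRing R] {I D : Ideal R}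
    (hI : I ^ 2 = I) (hfg : (I.map (Ideal.Quotient.mk D)).FG) :
    ∃ e ∈ I, ∀ x ∈ I, x - e * x ∈ D := by
  set J := I.map (Ideal.Quotient.mk D)
  obtain ⟨ε, hεJ, hε⟩ := Submodule.exists_mem_and_smul_eq_self_of_fg_of_le_smul J J hfg
    (by rw [smul_eq_mul, ← sq, ← Ideal.map_pow, hI])
  obtain ⟨e, heI, rfl⟩ :=
    (Ideal.mem_map_iff_of_surjective _ Ideal.Quotient.mk_surjective).mp hεJ
  refine ⟨e, heI, fun x hx => Ideal.Quotient.eq_zero_iff_mem.mp ?_⟩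
  rw [map_sub, map_mul, ← smul_eq_mul, hε _ (Ideal.mem_map_of_mem _ hx), sub_self]

theorem idempotent_ideal_avoidance {R : Type*} [CommRing R] (I : Ideal R)
    (hI : I ^ 2 = I) (n : ℕ) (f : Fin n → Ideal R)
    (h : (I : Set R) ⊆ ⋃ k, (f k : Set R)) :
    ∃ k, I ≤ f k := by
  classical
  let H k := (f k).toAddSubgroup.addSubgroupOf I.toAddSubgroup
  let s := Finset.univ.filter fun k => (H k).FiniteIndex
  let D := ⨅ k ∈ s, f k
  have : (D.toAddSubgroup.addSubgroupOf I.toAddSubgroup).FiniteIndex := by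
    have := AddSubgroup.finiteIndex_iInf' (s := s) H fun k hk => (Finset.mem_filter.mp hk).2
    refine AddSubgroup.finiteIndex_of_le (H := ⨅ k ∈ s, H k) fun x hx => ?_
    simpa [D, H, AddSubgroup.mem_addSubgroupOf] using hx
  obtain ⟨e, heI, he⟩ :=
    Ideal.exists_mem_forall_sub_mul_mem (D := D) hI Ideal.map_quotientMk_fg_of_finiteIndex
  obtain ⟨k, hk, hek⟩ :=
    AddSubgroup.exists_finiteIndex_addSubgroupOf_of_subset_iUnion (K := I.toAddSubgroup)
      (H := fun k => (f k).toAddSubgroup) h e heI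
  refine ⟨k, fun x hx => ?_⟩
  have hD : D ≤ f k := iInf₂_le k (Finset.mem_filter.mpr ⟨Finset.mem_univ k, hk⟩)
  simpa using add_mem (hD (he x hx)) (Ideal.mul_mem_right x (f k) hek)
end

section
/- Let I₁, …, Iₙ be finitely many ideals of a commutative ring R and M a finitely generated faithful R-module. If M = ⋃_{k=1}^n I_k M, then I_k = R for some k. -/
/-!
Suppose every `I_k` is proper and enlarge each to a maximal ideal `𝔪_k`. Since `M` is finitely
generated and faithful, Nakayama's lemma gives `𝔪 M ≠ M` for every proper ideal `𝔪`; pick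
`m_𝔪 ∉ 𝔪 M`. For the finitely many distinct `𝔪 = 𝔪_k`, choose `c_𝔪` lying in all the others but
not in `𝔪` (prime avoidance for the product). Then `m = ∑ c_𝔪 m_𝔪` lies in no `𝔪 M`: modulo
`𝔪 M` it is `c_𝔪 m_𝔪`, and `c_𝔪` is invertible modulo `𝔪`. Hence `m` lies in no `I_k M`.
-/

open Submodule

section

variable {R M : Type*} [CommRing R] [AddCommGroup M] [Module R M]

theorem Submodule.ideal_smul_top_ne_top_of_faithful [Module.Finite R M]
    (hfaithful : ∀ r : R, (∀ m : M, r • m = 0) → r = 0) {I : Ideal R} (hI : I ≠ ⊤) :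
    I • (⊤ : Submodule R M) ≠ ⊤ := by
  intro htop
  obtain ⟨r, hr1, hr⟩ :=
    exists_sub_one_mem_and_smul_eq_zero_of_fg_of_le_smul I ⊤ Module.Finite.fg_top htop.ge
  rw [hfaithful r fun m => hr m mem_top, zero_sub] at hr1
  exact hI (I.eq_top_of_isUnit_mem hr1 isUnit_one.neg)

theorem Submodule.mem_smul_top_of_smul_mem {𝔪 : Ideal R} (h𝔪 : 𝔪.IsMaximal) {c : R} (hc : c ∉ 𝔪)
    {x : M} (hcx : c • x ∈ 𝔪 • (⊤ : Submodule R M)) : x ∈ 𝔪 • (⊤ : Submodule R M) := by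
  obtain ⟨y, i, hi, hyci⟩ := h𝔪.exists_inv hc
  have : (y * c + i) • x ∈ 𝔪 • (⊤ : Submodule R M) := by
    rw [add_smul, mul_smul]
    exact add_mem (smul_mem _ y hcx) (smul_mem_smul hi mem_top)
  rwa [hyci, one_smul] at this

theorem Ideal.IsPrime.exists_notMem_forall_mem {P : Ideal R} (hP : P.IsPrime)
    {s : Finset (Ideal R)} (hs : ∀ J ∈ s, ¬J ≤ P) : ∃ c ∉ P, ∀ J ∈ s, c ∈ J := by
  have hinf : ¬s.inf id ≤ P := by
    rw [hP.inf_le']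
    rintro ⟨J, hJ, hJP⟩
    exact hs J hJ hJP
  obtain ⟨c, hcs, hcP⟩ := SetLike.not_le_iff_exists.mp hinf
  exact ⟨c, hcP, fun J hJ => Finset.inf_le (f := id) hJ hcs⟩

theorem Submodule.exists_forall_notMem_smul_top {s : Finset (Ideal R)}
    (hs : ∀ J ∈ s, J.IsMaximal) (hM : ∀ J ∈ s, J • (⊤ : Submodule R M) ≠ ⊤) :
    ∃ m : M, ∀ J ∈ s, m ∉ J • (⊤ : Submodule R M) := by
  classical
  have hc : ∀ J ∈ s, ∃ c ∉ J, ∀ J' ∈ s.erase J, c ∈ J' := fun J hJ =>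
    (hs J hJ).isPrime.exists_notMem_forall_mem fun J' hJ' hJ'J =>
      Finset.ne_of_mem_erase hJ' ((hs J' (Finset.mem_of_mem_erase hJ')).eq_of_le
        (hs J hJ).ne_top hJ'J)
  have hm : ∀ J ∈ s, ∃ m : M, m ∉ J • (⊤ : Submodule R M) := fun J hJ =>
    (SetLike.exists_of_lt (hM J hJ).lt_top).imp fun _ => And.right
  choose! c hcJ hcJ' using hc
  choose! m hm using hm
  refine ⟨∑ J ∈ s, c J • m J, fun 𝔪 h𝔪 hsum => ?_⟩
  rw [← Finset.add_sum_erase s _ h𝔪] at hsum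
  have hrest : ∑ J ∈ s.erase 𝔪, c J • m J ∈ 𝔪 • (⊤ : Submodule R M) :=
    sum_mem fun J hJ => smul_mem_smul (hcJ' J (Finset.mem_of_mem_erase hJ) 𝔪
      (Finset.mem_erase.2 ⟨(Finset.ne_of_mem_erase hJ).symm, h𝔪⟩)) mem_top
  exact hm 𝔪 h𝔪 <| mem_smul_top_of_smul_mem (hs 𝔪 h𝔪) (hcJ 𝔪 h𝔪)
    ((Submodule.add_mem_iff_left _ hrest).1 hsum)

end

theorem fg_faithful_union_smul {R : Type*} [CommRing R] {M : Type*} [AddCommGroup M]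
    [Module R M] [Module.Finite R M]
    (hfaithful : ∀ r : R, (∀ m : M, r • m = 0) → r = 0)
    (n : ℕ) (f : Fin n → Ideal R)
    (h : ∀ m : M, ∃ k, m ∈ f k • (⊤ : Submodule R M)) :
    ∃ k, f k = ⊤ := by
  classical
  by_contra! hproper
  choose 𝔪 h𝔪 hf𝔪 using fun k => (f k).exists_le_maximal (hproper k)
  obtain ⟨m, hm⟩ := exists_forall_notMem_smul_top (M := M) (s := Finset.univ.image 𝔪)
    (by simpa using h𝔪)
    (by simpa using fun k => ideal_smul_top_ne_top_of_faithful hfaithful (h𝔪 k).ne_top)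
  obtain ⟨k, hk⟩ := h m
  exact hm (𝔪 k) (Finset.mem_image_of_mem 𝔪 (Finset.mem_univ k)) (smul_mono_left (hf𝔪 k) hk)
end

section
/- Every finitely generated faithful multiplication module has avoidance: if M is such a module over a ring R and M equals a finite union of R-submodules M₁, …, Mₙ, then M = M_k for some k. -/
/-!
A proper submodule of a multiplication module is `I • M` for a proper ideal `I`, hence lies in
`P • M` for a maximal ideal `P`; so `M` is covered by finitely many `Pᵢ • M` with distinct maximal
`Pᵢ`. By Nakayama and faithfulness each `Pᵢ • M` is proper, and the Chinese remainder theorem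
glues witnesses `yᵢ ∉ Pᵢ • M` into one `x ≡ yᵢ (mod Pᵢ • M)` lying in none of them.
-/

open Function

namespace Submodule

variable {R M : Type*} [CommRing R] [AddCommGroup M] [Module R M]

theorem exists_forall_sub_mem_smul_top {ι : Type*} [Finite ι] {I : ι → Ideal R}
    (hI : Pairwise (IsCoprime on I)) (y : ι → M) :
    ∃ x : M, ∀ i, x - y i ∈ I i • (⊤ : Submodule R M) := by
  classical
  have := Fintype.ofFinite ι
  choose e he using fun j ↦ Ideal.exists_forall_sub_mem_ideal hI (Pi.single j 1)
  refine ⟨∑ j, e j • y j, fun i ↦ ?_⟩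
  have hy : y i = ∑ j, (Pi.single j 1 : ι → R) i • y j := by
    simp only [Pi.single_apply, ite_smul, one_smul, zero_smul, Finset.sum_ite_eq,
      Finset.mem_univ, if_true]
  rw [hy, ← Finset.sum_sub_distrib]
  exact sum_mem fun j _ ↦ sub_smul (e j) _ (y j) ▸ smul_mem_smul (he j i) mem_top

theorem exists_forall_notMem_smul_top_s6 {ι : Type*} [Finite ι] {I : ι → Ideal R}
    (hI : Pairwise (IsCoprime on I)) (hIM : ∀ i, I i • (⊤ : Submodule R M) ≠ ⊤) :
    ∃ x : M, ∀ i, x ∉ I i • (⊤ : Submodule R M) := by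
  choose y _ hy using fun i ↦ SetLike.exists_of_lt (lt_top_iff_ne_top.mpr (hIM i))
  obtain ⟨x, hx⟩ := exists_forall_sub_mem_smul_top hI y
  exact ⟨x, fun i hxi ↦ hy i (by simpa using sub_mem hxi (hx i))⟩

theorem ideal_smul_top_ne_top [Module.Finite R M] [FaithfulSMul R M] {I : Ideal R}
    (hI : I ≠ ⊤) : I • (⊤ : Submodule R M) ≠ ⊤ := by
  intro hItop
  obtain ⟨r, hr1, hr0⟩ := exists_sub_one_mem_and_smul_eq_zero_of_fg_of_le_smul I ⊤
    Module.Finite.fg_top hItop.ge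
  obtain rfl : r = 0 := FaithfulSMul.eq_of_smul_eq_smul (α := M) fun m ↦
    (hr0 m mem_top).trans (zero_smul R m).symm
  exact hI <| (Ideal.eq_top_iff_one I).mpr <| by simpa using I.neg_mem hr1

end Submodule

theorem multiplication_module_avoidance {R : Type*} [CommRing R] {M : Type*} [AddCommGroup M]
    [Module R M] [Module.Finite R M]
    (hfaithful : ∀ r : R, (∀ m : M, r • m = 0) → r = 0)
    (hmult : ∀ N : Submodule R M, ∃ I : Ideal R, N = I • (⊤ : Submodule R M))
    (n : ℕ) (f : Fin n → Submodule R M)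
    (h : ∀ m : M, ∃ k, m ∈ f k) :
    ∃ k, f k = ⊤ := by
  by_contra! hf
  have : FaithfulSMul R M := ⟨fun hr ↦ sub_eq_zero.mp <| hfaithful _ fun m ↦ by
    rw [sub_smul, hr m, sub_self]⟩
  have hP : ∀ k, ∃ P : Ideal R, P.IsMaximal ∧ f k ≤ P • (⊤ : Submodule R M) := fun k ↦ by
    obtain ⟨I, hI⟩ := hmult (f k)
    obtain ⟨P, hP, hIP⟩ := I.exists_le_maximal fun hItop ↦ hf k (by simpa [hItop] using hI)
    exact ⟨P, hP, hI ▸ Submodule.smul_mono_left hIP⟩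
  choose P hPmax hfP using hP
  -- Indexing by `Set.range P` discards repeated maximal ideals, which would not be coprime.
  have hcoprime : Pairwise (IsCoprime on fun Q : Set.range P ↦ (Q : Ideal R)) := by
    rintro ⟨_, k, rfl⟩ ⟨_, l, rfl⟩ hkl
    exact Ideal.isCoprime_iff_sup_eq.mpr <|
      (hPmax k).coprime_of_ne (hPmax l) (Subtype.coe_ne_coe.mpr hkl)
  obtain ⟨x, hx⟩ := Submodule.exists_forall_notMem_smul_top_s6 hcoprime fun Q ↦ by
    obtain ⟨_, k, rfl⟩ := Q
    exact Submodule.ideal_smul_top_ne_top (M := M) (hPmax k).ne_top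
  obtain ⟨k, hk⟩ := h x
  exact hx ⟨P k, k, rfl⟩ (hfP k hk)
end

section
/- If a ring map φ : R → S is such that every ideal of S is extended under φ (i.e. J = (φ⁻¹(J))S for all ideals J of S), and R is an avoidance ring, then S is an avoidance ring. -/
/-- A commutative ring is an avoidance ring if every ideal contained in a finite
union of ideals is contained in one of them. -/
def IsAvoidanceRing (R : Type*) [CommRing R] : Prop :=
  ∀ (n : ℕ) (I : Ideal R) (f : Fin n → Ideal R),
    (I : Set R) ⊆ (⋃ k, (f k : Set R)) → ∃ k, I ≤ f k

namespace Ideal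

variable {R S : Type*} [Semiring R] [Semiring S] {φ : R →+* S}

lemma coe_comap_subset_iUnion_comap {ι : Type*} {I : Ideal S} {f : ι → Ideal S}
    (h : (I : Set S) ⊆ ⋃ k, (f k : Set S)) :
    (I.comap φ : Set R) ⊆ ⋃ k, ((f k).comap φ : Set R) := by
  simpa only [coe_comap, Set.preimage_iUnion] using Set.preimage_mono h

lemma le_of_comap_le_of_map_comap_eq {J K : Ideal S} (hJ : (J.comap φ).map φ = J)
    (h : J.comap φ ≤ K.comap φ) : J ≤ K :=
  hJ ▸ (map_mono h).trans map_comap_le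

end Ideal

theorem avoidance_of_all_ideals_extended {R S : Type*} [CommRing R] [CommRing S]
    (φ : R →+* S) (hext : ∀ J : Ideal S, J = (J.comap φ).map φ)
    (hR : IsAvoidanceRing R) : IsAvoidanceRing S := by
  intro n I f hcover
  obtain ⟨k, hk⟩ := hR n (I.comap φ) (fun k => (f k).comap φ)
    (Ideal.coe_comap_subset_iUnion_comap hcover)
  exact ⟨k, Ideal.le_of_comap_le_of_map_comap_eq (hext I).symm hk⟩
end

section
/- Any quotient of an avoidance ring is an avoidance ring. -/
theorem IsAvoidanceRing.of_surjective {R S : Type*} [CommRing R] [CommRing S] (φ : R →+* S)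
    (hφ : Function.Surjective φ) (hR : IsAvoidanceRing R) : IsAvoidanceRing S := by
  intro n J f hJ
  have hcover : (J.comap φ : Set R) ⊆ ⋃ k, ((f k).comap φ : Set R) := by
    simpa only [Ideal.coe_comap, Set.preimage_iUnion] using Set.preimage_mono hJ
  obtain ⟨k, hk⟩ := hR n _ _ hcover
  exact ⟨k, (Ideal.comap_le_comap_iff_of_surjective φ hφ J (f k)).mp hk⟩

theorem avoidance_quotient {R : Type*} [CommRing R] (hR : IsAvoidanceRing R)
    (I : Ideal R) : IsAvoidanceRing (R ⧸ I) :=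
  hR.of_surjective (Ideal.Quotient.mk I) Ideal.Quotient.mk_surjective
end

section
/- Any localization of an avoidance ring at a multiplicative subset is an avoidance ring. -/
theorem IsAvoidanceRing.of_map_comap_eq {R S : Type*} [CommRing R] [CommRing S] (φ : R →+* S)
    (hφ : ∀ J : Ideal S, (J.comap φ).map φ = J) (hR : IsAvoidanceRing R) :
    IsAvoidanceRing S := by
  intro n I f hI
  have hcover : ((I.comap φ : Ideal R) : Set R) ⊆ ⋃ k, ((f k).comap φ : Set R) := fun x hx ↦ by
    simpa only [Set.mem_iUnion, SetLike.mem_coe, Ideal.mem_comap] using hI hx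
  obtain ⟨k, hk⟩ := hR n (I.comap φ) (fun k ↦ (f k).comap φ) hcover
  refine ⟨k, ?_⟩
  calc I = (I.comap φ).map φ := (hφ I).symm
    _ ≤ ((f k).comap φ).map φ := Ideal.map_mono hk
    _ = f k := hφ (f k)

theorem avoidance_localization {R : Type*} [CommRing R] (M : Submonoid R)
    (S : Type*) [CommRing S] [Algebra R S] [IsLocalization M S]
    (hR : IsAvoidanceRing R) : IsAvoidanceRing S :=
  hR.of_map_comap_eq (algebraMap R S) (IsLocalization.map_under M S)
end

section
/- A finite product R₁ × R₂ of commutative rings is an avoidance ring if and only if both R₁ and R₂ are avoidance rings. -/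
namespace IsAvoidanceRing

variable {R : Type*} [CommRing R]

theorem exists_le_of_subset_iUnion (hR : IsAvoidanceRing R) {ι : Type*} [Finite ι]
    {I : Ideal R} (f : ι → Ideal R) (hI : (I : Set R) ⊆ ⋃ k, (f k : Set R)) :
    ∃ k, I ≤ f k := by
  obtain ⟨n, ⟨e⟩⟩ := Finite.exists_equiv_fin ι
  obtain ⟨k, hk⟩ := hR n I (f ∘ e.symm) (by rwa [Function.comp_def, e.symm.surjective.iUnion_comp fun k => (f k : Set R)])
  exact ⟨e.symm k, hk⟩

theorem exists_mem_forall_notMem (hR : IsAvoidanceRing R) {ι : Type*} [Finite ι]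
    {I : Ideal R} (f : ι → Ideal R) (hf : ∀ k, ¬I ≤ f k) : ∃ y ∈ I, ∀ k, y ∉ f k := by
  by_contra! h
  obtain ⟨k, hk⟩ := hR.exists_le_of_subset_iUnion f fun y hy => Set.mem_iUnion.mpr (h y hy)
  exact hf k hk

theorem of_surjective_s10 {S : Type*} [CommRing S] (hR : IsAvoidanceRing R) {φ : R →+* S}
    (hφ : Function.Surjective φ) : IsAvoidanceRing S := by
  intro n I f hI
  obtain ⟨k, hk⟩ := hR n (I.comap φ) (fun k => (f k).comap φ) fun x hx => by simpa using hI hx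
  exact ⟨k, (Ideal.comap_le_comap_iff_of_surjective φ hφ _ _).mp hk⟩

variable {R₁ R₂ : Type*} [CommRing R₁] [CommRing R₂]

theorem exists_prod_le_of_subset_iUnion (h₁ : IsAvoidanceRing R₁) (h₂ : IsAvoidanceRing R₂)
    {ι : Type*} [Finite ι] {I₁ : Ideal R₁} {I₂ : Ideal R₂} (A : ι → Ideal R₁)
    (B : ι → Ideal R₂)
    (hI : (I₁.prod I₂ : Set (R₁ × R₂)) ⊆ ⋃ k, ((A k).prod (B k) : Set (R₁ × R₂))) :
    ∃ k, I₁ ≤ A k ∧ I₂ ≤ B k := by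
  obtain ⟨y, hy, hyB⟩ :=
    h₂.exists_mem_forall_notMem (fun k : {k // ¬I₂ ≤ B k} => B k) fun k => k.2
  have hcover : (I₁ : Set R₁) ⊆ ⋃ k : {k // I₂ ≤ B k}, (A k : Set R₁) := by
    intro x hx
    obtain ⟨k, hxA, hyBk⟩ := Set.mem_iUnion.mp (hI (show (x, y) ∈ I₁.prod I₂ from ⟨hx, hy⟩))
    have hk : I₂ ≤ B k := by
      by_contra hk
      exact hyB ⟨k, hk⟩ hyBk
    exact Set.mem_iUnion.mpr ⟨⟨k, hk⟩, hxA⟩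
  obtain ⟨k, hk⟩ := h₁.exists_le_of_subset_iUnion _ hcover
  exact ⟨k, hk, k.2⟩

theorem prod (h₁ : IsAvoidanceRing R₁) (h₂ : IsAvoidanceRing R₂) :
    IsAvoidanceRing (R₁ × R₂) := by
  intro n I f hI
  obtain ⟨k, hA, hB⟩ := exists_prod_le_of_subset_iUnion h₁ h₂
    (fun k => (f k).map (RingHom.fst R₁ R₂)) (fun k => (f k).map (RingHom.snd R₁ R₂))
    (I₁ := I.map (RingHom.fst R₁ R₂)) (I₂ := I.map (RingHom.snd R₁ R₂))
    (by simpa only [← Ideal.ideal_prod_eq] using hI)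
  refine ⟨k, ?_⟩
  rw [I.ideal_prod_eq, (f k).ideal_prod_eq]
  exact Ideal.prod_mono hA hB

end IsAvoidanceRing

theorem avoidance_prod {R₁ R₂ : Type*} [CommRing R₁] [CommRing R₂] :
    IsAvoidanceRing (R₁ × R₂) ↔ IsAvoidanceRing R₁ ∧ IsAvoidanceRing R₂ :=
  ⟨fun h => ⟨h.of_surjective_s10 (φ := RingHom.fst R₁ R₂) Prod.fst_surjective,
      h.of_surjective_s10 (φ := RingHom.snd R₁ R₂) Prod.snd_surjective⟩,
    fun ⟨h₁, h₂⟩ => h₁.prod h₂⟩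
end

section
/- Every Bézout ring is an avoidance ring. -/
namespace Submodule

variable {R M ι : Type*} [Semiring R] [AddCommMonoid M] [Module R M]

theorem IsPrincipal.exists_le_of_subset_iUnion {N : Submodule R M} [N.IsPrincipal]
    {f : ι → Submodule R M} (h : (N : Set M) ⊆ ⋃ i, (f i : Set M)) : ∃ i, N ≤ f i := by
  obtain ⟨i, hi⟩ := Set.mem_iUnion.mp (h (IsPrincipal.generator_mem N))
  refine ⟨i, ?_⟩
  rwa [← IsPrincipal.span_singleton_generator N, span_singleton_le_iff_mem]

theorem exists_le_of_forall_fg_le [Finite ι] {N : Submodule R M} {f : ι → Submodule R M}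
    (h : ∀ P ≤ N, P.FG → ∃ i, P ≤ f i) : ∃ i, N ≤ f i := by
  by_contra! hN
  choose x hxN hxf using fun i => SetLike.not_le_iff_exists.mp (hN i)
  obtain ⟨i, hi⟩ := h (span R (Set.range x)) (span_le.mpr (Set.range_subset_iff.mpr hxN))
    (fg_span (Set.finite_range x))
  exact hxf i (hi (subset_span ⟨i, rfl⟩))

end Submodule

theorem bezout_isAvoidanceRing {R : Type*} [CommRing R] [IsBezout R] :
    IsAvoidanceRing R := by
  intro n I f h
  refine Submodule.exists_le_of_forall_fg_le fun J hJI hJ => ?_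
  have := IsBezout.isPrincipal_of_FG J hJ
  exact Submodule.IsPrincipal.exists_le_of_subset_iUnion (subset_trans hJI h)
end

section
/- Every commutative ring containing an infinite field as a subring is an avoidance ring; more strongly, every module over such a ring has the avoidance property for submodules. -/
/-!
Restricting scalars to `K`, a cover of a module by finitely many submodules becomes a cover of
a `K`-vector space by finitely many subspaces, and over an infinite field a vector space is
never a finite union of proper subspaces.
-/

theorem Submodule.exists_eq_top_of_iUnion_eq_univ {K R M ι : Type*} [Field K] [Infinite K]
    [Semiring R] [AddCommGroup M] [Module K M] [Module R M] [SMul K R] [IsScalarTower K R M]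
    [Finite ι] {p : ι → Submodule R M} (hcovers : ⋃ i, (p i : Set M) = Set.univ) :
    ∃ i, p i = ⊤ := by
  obtain ⟨i, hi⟩ :=
    Subspace.exists_eq_top_of_iUnion_eq_univ (p := fun i => (p i).restrictScalars K) hcovers
  exact ⟨i, (restrictScalars_eq_top_iff K R M).mp hi⟩

theorem Submodule.exists_le_of_subset_iUnion (K : Type*) {R M ι : Type*} [Field K] [Infinite K]
    [CommRing R] [Algebra K R] [AddCommGroup M] [Module R M] [Finite ι]
    {N : Submodule R M} {p : ι → Submodule R M} (hN : (N : Set M) ⊆ ⋃ i, (p i : Set M)) :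
    ∃ i, N ≤ p i := by
  let _ : Module K M := Module.compHom M (algebraMap K R)
  have : IsScalarTower K R M := ⟨fun a r m => by rw [Algebra.smul_def, mul_smul]; rfl⟩
  have hcovers : ⋃ i, ((p i).comap N.subtype : Set N) = Set.univ :=
    Set.eq_univ_of_forall fun x => by simpa using hN x.2
  obtain ⟨i, hi⟩ := exists_eq_top_of_iUnion_eq_univ (K := K) hcovers
  exact ⟨i, comap_subtype_eq_top.mp hi⟩

theorem avoidance_of_infinite_field_subring_general {K R : Type*} [Field K] [Infinite K]
    [CommRing R] [Algebra K R] :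
    IsAvoidanceRing R ∧
      ∀ (M : Type*) [AddCommGroup M] [Module R M] (n : ℕ) (f : Fin n → Submodule R M),
        (∀ m : M, ∃ k, m ∈ f k) → ∃ k, f k = ⊤ := by
  refine ⟨fun _ _ _ hI => Submodule.exists_le_of_subset_iUnion K hI, fun M _ _ _ f hf => ?_⟩
  obtain ⟨k, hk⟩ := Submodule.exists_le_of_subset_iUnion K (N := ⊤) (p := f)
    fun m _ => Set.mem_iUnion.mpr (hf m)
  exact ⟨k, top_le_iff.mp hk⟩

theorem avoidance_of_infinite_field_subring {K R : Type*} [Field K] [Infinite K]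
    [CommRing R] [Algebra K R] (hinj : Function.Injective (algebraMap K R)) :
    IsAvoidanceRing R ∧
      ∀ (M : Type*) [AddCommGroup M] [Module R M] (n : ℕ) (f : Fin n → Submodule R M),
        (∀ m : M, ∃ k, m ∈ f k) → ∃ k, f k = ⊤ :=
  avoidance_of_infinite_field_subring_general (K := K)
end

section
/- Let K be a finite field. The ring R = K[x,y]/(x², xy, y²) is not an avoidance ring: the ideal (x, y) equals the finite union of the principal ideals (ax + by) for a, b ∈ K, but is not principal. -/
open MvPolynomial

/-- The ring `K[x,y]/(x², xy, y²)`. -/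
def SquareZeroRing (K : Type*) [Field K] : Type _ :=
  MvPolynomial (Fin 2) K ⧸
    (Ideal.span {(X 0 : MvPolynomial (Fin 2) K) ^ 2, X 0 * X 1, X 1 ^ 2})

noncomputable instance (K : Type*) [Field K] : CommRing (SquareZeroRing K) :=
  Ideal.Quotient.commRing _

/-- The image of a polynomial in `K[x,y]/(x², xy, y²)`. -/
noncomputable def sqMk (K : Type*) [Field K] :
    MvPolynomial (Fin 2) K →+* SquareZeroRing K :=
  Ideal.Quotient.mk _

/-!
Every element of `𝔪 = (x, y)` is a linear form `ax + by`, because `s · x = s(0) x` for every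
`s ∈ R` (all monomials of degree two vanish). So `𝔪` is the finite union of the principal ideals
`(ax + by)`, each contained in `𝔪`. It is not principal: `R → K ⊕ K²`, `x ↦ e₀`, `y ↦ e₁`
(into the trivial square-zero extension) sends `s · r` to `s(0) · r` on `𝔪`, so a single generator
would make `e₀` and `e₁` proportional. An avoidance ring would put `𝔪` inside one of the
`(ax + by)`, making it principal.
-/

open TrivSqZeroExt

theorem IsAvoidanceRing.exists_le_of_subset_iUnion_s14 {R ι : Type*} [CommRing R] [Finite ι]
    (hR : IsAvoidanceRing R) {I : Ideal R} {f : ι → Ideal R}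
    (hI : (I : Set R) ⊆ ⋃ i, (f i : Set R)) : ∃ i, I ≤ f i := by
  obtain ⟨n, ⟨e⟩⟩ := Finite.exists_equiv_fin ι
  obtain ⟨k, hk⟩ := hR n I (f ∘ e.symm) (by rwa [← e.symm.surjective.iUnion_comp] at hI)
  exact ⟨e.symm k, hk⟩

theorem not_isAvoidanceRing_of_coe_eq_iUnion_span_singleton {R ι : Type*} [CommRing R]
    [Finite ι] {I : Ideal R} {g : ι → R}
    (hg : (I : Set R) = ⋃ i, (Ideal.span {g i} : Set R)) (hI : ¬ I.IsPrincipal) :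
    ¬ IsAvoidanceRing R := by
  intro hR
  obtain ⟨i, hi⟩ := hR.exists_le_of_subset_iUnion_s14 hg.subset
  have hgi : g i ∈ I := by
    rw [← SetLike.mem_coe, hg]
    exact Set.mem_iUnion.2 ⟨i, Ideal.mem_span_singleton_self _⟩
  exact hI ⟨g i, le_antisymm hi ((Ideal.span_singleton_le_iff_mem I).2 hgi)⟩

namespace SquareZeroRing

variable {K : Type*} [Field K]

theorem sqMk_eq_zero_iff {p : MvPolynomial (Fin 2) K} :
    sqMk K p = 0 ↔ p ∈ Ideal.span {(X 0 : MvPolynomial (Fin 2) K) ^ 2, X 0 * X 1, X 1 ^ 2} :=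
  Ideal.Quotient.eq_zero_iff_mem

theorem sqMk_surjective : Function.Surjective (sqMk K) :=
  Ideal.Quotient.mk_surjective

theorem sqMk_X_mul_X (i j : Fin 2) : sqMk K (X i * X j) = 0 := by
  rw [sqMk_eq_zero_iff]
  fin_cases i <;> fin_cases j
  · exact Ideal.subset_span (by simp [sq])
  · exact Ideal.subset_span (by simp)
  · rw [mul_comm]
    exact Ideal.subset_span (by simp)
  · exact Ideal.subset_span (by simp [sq])

theorem sqMk_mul_X (f : MvPolynomial (Fin 2) K) (i : Fin 2) :
    sqMk K (f * X i) = sqMk K (C (constantCoeff f) * X i) := by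
  induction f using MvPolynomial.induction_on with
  | C a => simp
  | add p q hp hq => simp only [add_mul, map_add, hp, hq]
  | mul_X p j _ => simp [mul_assoc, sqMk_X_mul_X]

theorem mem_span_X_iff {r : SquareZeroRing K} :
    r ∈ Ideal.span {sqMk K (X 0), sqMk K (X 1)} ↔
      ∃ a b : K, r = sqMk K (C a * X 0 + C b * X 1) := by
  constructor
  · intro hr
    obtain ⟨s, t, rfl⟩ := Ideal.mem_span_pair.1 hr
    obtain ⟨f, rfl⟩ := sqMk_surjective s
    obtain ⟨g, rfl⟩ := sqMk_surjective t
    refine ⟨constantCoeff f, constantCoeff g, ?_⟩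
    rw [map_add, ← sqMk_mul_X, ← sqMk_mul_X]
    rfl
  · rintro ⟨a, b, rfl⟩
    exact Ideal.mem_span_pair.2 ⟨sqMk K (C a), sqMk K (C b), by simp only [map_add, map_mul]⟩

theorem coe_span_X_eq_iUnion :
    ((Ideal.span {sqMk K (X 0), sqMk K (X 1)} : Ideal (SquareZeroRing K)) :
        Set (SquareZeroRing K)) =
      ⋃ (a : K) (b : K), ((Ideal.span {sqMk K (C a * X 0 + C b * X 1)} :
        Ideal (SquareZeroRing K)) : Set (SquareZeroRing K)) := by
  ext r
  simp only [SetLike.mem_coe, Set.mem_iUnion]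
  constructor
  · intro hr
    obtain ⟨a, b, rfl⟩ := mem_span_X_iff.1 hr
    exact ⟨a, b, Ideal.mem_span_singleton_self _⟩
  · rintro ⟨a, b, hr⟩
    exact (Ideal.span_singleton_le_iff_mem _).2 (mem_span_X_iff.2 ⟨a, b, rfl⟩) hr

variable (K) in
noncomputable def toTrivSqZeroExt : SquareZeroRing K →+* TrivSqZeroExt K (Fin 2 → K) :=
  Ideal.Quotient.lift _ (aeval fun i => inr (Pi.single i 1)).toRingHom <| by
    refine fun p hp => (Ideal.span_le (I := RingHom.ker _)).2 ?_ hp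
    simp [Set.insert_subset_iff, sq, inr_mul_inr]

theorem toTrivSqZeroExt_sqMk (p : MvPolynomial (Fin 2) K) :
    toTrivSqZeroExt K (sqMk K p) = aeval (fun i => inr (Pi.single i 1)) p :=
  Ideal.Quotient.lift_mk _ _ _

theorem toTrivSqZeroExt_sqMk_X (i : Fin 2) :
    toTrivSqZeroExt K (sqMk K (X i)) = inr (Pi.single i 1) := by
  rw [toTrivSqZeroExt_sqMk, aeval_X]

theorem fst_toTrivSqZeroExt_of_mem {r : SquareZeroRing K}
    (hr : r ∈ Ideal.span {sqMk K (X 0), sqMk K (X 1)}) : (toTrivSqZeroExt K r).fst = 0 := by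
  refine (Ideal.span_le (I := RingHom.ker ((fstHom K K _).toRingHom.comp
    (toTrivSqZeroExt K)))).2 ?_ hr
  simp [Set.insert_subset_iff, toTrivSqZeroExt_sqMk_X]

theorem span_X_not_isPrincipal :
    ¬ (Ideal.span {sqMk K (X 0), sqMk K (X 1)} : Ideal (SquareZeroRing K)).IsPrincipal := by
  rintro ⟨r, hr⟩
  rw [Ideal.submodule_span_eq] at hr
  have hfst := fst_toTrivSqZeroExt_of_mem (hr ▸ Ideal.mem_span_singleton_self r)
  set v := (toTrivSqZeroExt K r).snd
  -- multiplying `r` by `s` scales the linear part `v` by `s(0)`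
  have hmul : ∀ i, sqMk K (X i) ∈ Ideal.span {r} → ∃ c : K, Pi.single i 1 = c • v := by
    intro i hi
    obtain ⟨s, hs⟩ := Ideal.mem_span_singleton'.1 hi
    refine ⟨(toTrivSqZeroExt K s).fst, ?_⟩
    have := congrArg snd (toTrivSqZeroExt_sqMk_X (K := K) i)
    rw [← hs, map_mul, snd_mul, hfst] at this
    simpa using this.symm
  obtain ⟨c, hc⟩ := hmul 0 (hr ▸ Ideal.subset_span (by simp))
  obtain ⟨d, hd⟩ := hmul 1 (hr ▸ Ideal.subset_span (by simp))
  have h00 : c * v 0 = 1 := by simpa using (congrFun hc 0).symm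
  have h01 : c * v 1 = 0 := by simpa using (congrFun hc 1).symm
  have h11 : d * v 1 = 1 := by simpa using (congrFun hd 1).symm
  have hv1 : v 1 = 0 := (mul_eq_zero.1 h01).resolve_left (left_ne_zero_of_mul_eq_one h00)
  simp [hv1] at h11

end SquareZeroRing

theorem squareZeroRing_not_avoidance (K : Type*) [Field K] [Fintype K] :
    ((Ideal.span {sqMk K (X 0), sqMk K (X 1)} : Ideal (SquareZeroRing K)) : Set (SquareZeroRing K)) =
        (⋃ (a : K) (b : K),
          ((Ideal.span {sqMk K (C a * X 0 + C b * X 1)} : Ideal (SquareZeroRing K)) :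
            Set (SquareZeroRing K))) ∧
      ¬ (Ideal.span {sqMk K (X 0), sqMk K (X 1)} : Ideal (SquareZeroRing K)).IsPrincipal ∧
      ¬ IsAvoidanceRing (SquareZeroRing K) := by
  have hunion := SquareZeroRing.coe_span_X_eq_iUnion (K := K)
  have hnp := SquareZeroRing.span_X_not_isPrincipal (K := K)
  refine ⟨hunion, hnp, not_isAvoidanceRing_of_coe_eq_iUnion_span_singleton
    (g := fun p : K × K => sqMk K (C p.1 * X 0 + C p.2 * X 1)) ?_ hnp⟩
  rwa [Set.iUnion_prod']
end

section
/- Let φ : R → S be a cyclically pure ring map. If S is von Neumann regular (absolutely flat), then R is von Neumann regular. If S is a valuation ring (an integral domain whose ideals are totally ordered by inclusion), then R is a valuation ring. -/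
/-! Every ideal of `R` is contracted from `S`, so divisibility `φ b ∣ φ a` in `S` descends to
`b ∣ a` in `R`, and `ker φ = (⊥ : Ideal S).comap φ = ⊥`. Von Neumann regularity (`a ^ 2 ∣ a`) and
total ordering of divisibility (equivalently of ideals) are statements about divisibility, so they
descend; being a domain descends along the injective map `φ`. -/

def RingHom.IsCyclicallyPure {R S : Type*} [CommRing R] [CommRing S] (φ : R →+* S) : Prop :=
  ∀ I : Ideal R, (I.map φ).comap φ = I

namespace RingHom.IsCyclicallyPure

variable {R S : Type*} [CommRing R] [CommRing S] {φ : R →+* S}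

theorem injective (h : φ.IsCyclicallyPure) : Function.Injective φ := by
  rw [injective_iff_ker_eq_bot, ker_eq_comap_bot, ← Ideal.map_bot (f := φ), h]

theorem dvd_of_map_dvd (h : φ.IsCyclicallyPure) {a b : R} (hab : φ a ∣ φ b) : a ∣ b := by
  rwa [← Ideal.mem_span_singleton, ← h (Ideal.span {a}), Ideal.mem_comap, Ideal.map_span, Set.image_singleton,
    Ideal.mem_span_singleton]

theorem sq_dvd_self (h : φ.IsCyclicallyPure) (hS : ∀ s : S, s ^ 2 ∣ s) (a : R) : a ^ 2 ∣ a :=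
  h.dvd_of_map_dvd (map_pow φ a 2 ▸ hS (φ a))

theorem isDomain [IsDomain S] (h : φ.IsCyclicallyPure) : IsDomain R :=
  h.injective.isDomain φ

theorem preValuationRing [PreValuationRing S] (h : φ.IsCyclicallyPure) : PreValuationRing R :=
  PreValuationRing.iff_dvd_total.mpr
    ⟨fun a b => (ValuationRing.dvd_total (φ a) (φ b)).imp h.dvd_of_map_dvd h.dvd_of_map_dvd⟩

end RingHom.IsCyclicallyPure

theorem cyclically_pure_descends {R S : Type*} [CommRing R] [CommRing S] (φ : R →+* S)
    (hpure : ∀ I : Ideal R, (I.map φ).comap φ = I) :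
    ((∀ a : S, ∃ x : S, a = a ^ 2 * x) → ∀ a : R, ∃ x : R, a = a ^ 2 * x) ∧
      ((IsDomain S ∧ ∀ J₁ J₂ : Ideal S, J₁ ≤ J₂ ∨ J₂ ≤ J₁) →
        (IsDomain R ∧ ∀ I₁ I₂ : Ideal R, I₁ ≤ I₂ ∨ I₂ ≤ I₁)) := by
  have h : φ.IsCyclicallyPure := hpure
  refine ⟨h.sq_dvd_self, fun ⟨hS, hS_total⟩ => ⟨h.isDomain, ?_⟩⟩
  have : PreValuationRing S := PreValuationRing.iff_ideal_total.mpr ⟨hS_total⟩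
  exact (PreValuationRing.iff_ideal_total.mp h.preValuationRing).total
end

section
/- The ring of integers ℤ has strong avoidance: for any ring map φ : R → ℤ and ideals I, I₁, …, Iₙ of R with I ⊆ ⋃_{k=1}^n I_k, the extension Iℤ is contained in I_kℤ for some k. -/
/-!
Every ring map `φ : R → ℤ` is surjective, and `ℤ` is a PID. Write `Iℤ = (d)` and lift `d` to some
`x ∈ I`; then `x` lies in some `I_k`, so `d = φ x ∈ I_kℤ` and hence `Iℤ ≤ I_kℤ`.
-/

theorem RingHom.surjective_of_codomain_int {R : Type*} [Ring R] (φ : R →+* ℤ) :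
    Function.Surjective φ :=
  fun m => ⟨m, map_intCast φ m⟩

theorem Ideal.exists_map_le_map_of_subset_iUnion {R S ι : Type*} [Semiring R] [Semiring S]
    [IsPrincipalIdealRing S] {φ : R →+* S} (hφ : Function.Surjective φ) {I : Ideal R}
    {f : ι → Ideal R} (h : (I : Set R) ⊆ ⋃ k, (f k : Set R)) :
    ∃ k, I.map φ ≤ (f k).map φ := by
  obtain ⟨x, hxI, hx⟩ := (Ideal.mem_map_iff_of_surjective φ hφ).mp
    (Submodule.IsPrincipal.generator_mem (I.map φ))
  obtain ⟨_, ⟨k, rfl⟩, hxk⟩ := h hxI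
  refine ⟨k, ?_⟩
  rw [← Submodule.IsPrincipal.span_singleton_generator (I.map φ), Ideal.span_le,
    Set.singleton_subset_iff, ← hx]
  exact Ideal.mem_map_of_mem φ hxk

theorem int_strong_avoidance {R : Type*} [CommRing R] (φ : R →+* ℤ)
    (n : ℕ) (I : Ideal R) (f : Fin n → Ideal R)
    (h : (I : Set R) ⊆ ⋃ k, (f k : Set R)) :
    ∃ k, I.map φ ≤ (f k).map φ :=
  Ideal.exists_map_le_map_of_subset_iUnion φ.surjective_of_codomain_int h
end
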